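/- arXiv:1312.7514 — 3 statements merged into one kernel-verified Lean document; each statement's English description precedes it below -/
import Mathlib

section
/- For any finite rooted trees A and B there exist a finite rooted tree C and epimorphisms φ : C → A and ψ : C → B. (The joint projection property for the family of finite rooted trees; Proposition 2.3, JPP part.) -/
structure FiniteRootedTree where
  carrier : Type
  [fintype : Fintype carrier]
  [po : PartialOrder carrier]
  [bot : OrderBot carrier]
  chains : ∀ t : carrier, IsChain (· ≤ ·) {s | s ≤ t}

attribute [instance] FiniteRootedTree.fintype FiniteRootedTree.po FiniteRootedTree.bot

def FiniteRootedTree.R (T : FiniteRootedTree) (s t : T.carrier) : Prop := s = t ∨ s ⋖ t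

def IsTreeEpi (S T : FiniteRootedTree) (φ : S.carrier → T.carrier) : Prop :=
  Function.Surjective φ ∧
  (∀ s s' : S.carrier, S.R s s' → T.R (φ s) (φ s')) ∧
  (∀ t t' : T.carrier, T.R t t' → ∃ s s' : S.carrier, φ s = t ∧ φ s' = t' ∧ S.R s s')

namespace TreeGlue

variable (A B : FiniteRootedTree)

structure Glue (A B : FiniteRootedTree) where
  val : A.carrier ⊕ B.carrier

abbrev gl (a : A.carrier) : Glue A B := ⟨.inl a⟩
abbrev gr (b : B.carrier) : Glue A B := ⟨.inr b⟩

instance : Fintype (Glue A B) :=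
  Fintype.ofEquiv (A.carrier ⊕ B.carrier) ⟨Glue.mk, Glue.val, fun _ => rfl, fun _ => rfl⟩

def gle : Glue A B → Glue A B → Prop
  | ⟨.inl a⟩, ⟨.inl a'⟩ => a ≤ a'
  | ⟨.inl a⟩, ⟨.inr _⟩ => a = ⊥
  | ⟨.inr _⟩, ⟨.inl _⟩ => False
  | ⟨.inr b⟩, ⟨.inr b'⟩ => b ≤ b'

instance gpo : PartialOrder (Glue A B) where
  le := gle A B
  le_refl x := by obtain ⟨x|x⟩ := x <;> simp [gle]
  le_trans x y z hxy hyz := by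
    obtain ⟨x|x⟩ := x <;> obtain ⟨y|y⟩ := y <;> obtain ⟨z|z⟩ := z <;>
      simp_all [gle] <;> exact le_trans hxy hyz
  le_antisymm x y hxy hyx := by
    obtain ⟨x|x⟩ := x <;> obtain ⟨y|y⟩ := y <;> simp_all [gle]
    · exact le_antisymm hxy hyx
    · exact le_antisymm hxy hyx

instance gbot : OrderBot (Glue A B) where
  bot := ⟨.inl ⊥⟩
  bot_le x := by obtain ⟨x|x⟩ := x <;> simp [LE.le, gle]

variable {A B}

@[simp] lemma inl_le_inl {a a' : A.carrier} : gl A B a ≤ gl A B a' ↔ a ≤ a' := Iff.rfl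
@[simp] lemma inr_le_inr {b b' : B.carrier} : gr A B b ≤ gr A B b' ↔ b ≤ b' := Iff.rfl
@[simp] lemma inl_le_inr {a : A.carrier} {b : B.carrier} : gl A B a ≤ gr A B b ↔ a = ⊥ := Iff.rfl
@[simp] lemma inr_le_inl {a : A.carrier} {b : B.carrier} : ¬ (gr A B b ≤ gl A B a) := id

lemma gl_inj {a a' : A.carrier} (h : gl A B a = gl A B a') : a = a' := by
  cases h; rfl
lemma gr_inj {b b' : B.carrier} (h : gr A B b = gr A B b') : b = b' := by
  cases h; rfl
lemma gl_ne_gr {a : A.carrier} {b : B.carrier} : gl A B a ≠ gr A B b := by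
  intro h; cases h
lemma gr_ne_gl {a : A.carrier} {b : B.carrier} : gr A B b ≠ gl A B a := by
  intro h; cases h

variable (A B)

def C : FiniteRootedTree where
  carrier := Glue A B
  chains t := by
    intro x hx y hy hne
    obtain ⟨a'|b'⟩ := t
    · obtain ⟨a|b⟩ := x
      · obtain ⟨c|c⟩ := y
        · rcases A.chains a' hx hy (fun h => hne (congrArg (gl A B) h)) with h | h
          · exact Or.inl h
          · exact Or.inr h
        · exact absurd (show gr A B c ≤ gl A B a' from hy) inr_le_inl
      · exact absurd (show gr A B b ≤ gl A B a' from hx) inr_le_inl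
    · obtain ⟨a|b⟩ := x
      · have ha : a = ⊥ := hx
        obtain ⟨c|c⟩ := y
        · have hc : c = ⊥ := hy
          exact absurd (ha.trans hc.symm ▸ rfl) (hne ∘ congrArg (gl A B))
        · exact Or.inl (show gl A B a ≤ gr A B c from inl_le_inr.mpr ha)
      · obtain ⟨c|c⟩ := y
        · exact Or.inr (show gl A B c ≤ gr A B b from inl_le_inr.mpr hy)
        · rcases B.chains b' hx hy (fun h => hne (congrArg (gr A B) h)) with h | h
          · exact Or.inl h
          · exact Or.inr h

variable {A B}

lemma covby_inl_inl {a a' : A.carrier} :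
    gl A B a ⋖ gl A B a' ↔ a ⋖ a' := by
  constructor
  · rintro ⟨hlt, hmax⟩
    refine ⟨lt_of_le_of_ne hlt.le (fun h => hlt.ne (congrArg (gl A B) h)), ?_⟩
    intro c hc hc'
    exact @hmax (gl A B c)
      (lt_of_le_of_ne (inl_le_inl.mpr hc.le) (fun h => hc.ne (gl_inj h)))
      (lt_of_le_of_ne (inl_le_inl.mpr hc'.le) (fun h => hc'.ne (gl_inj h)))
  · rintro ⟨hlt, hmax⟩
    refine ⟨lt_of_le_of_ne (inl_le_inl.mpr hlt.le) (fun h => hlt.ne (gl_inj h)), ?_⟩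
    rintro ⟨c|c⟩ hc hc'
    · exact hmax (lt_of_le_of_ne hc.le (fun h => hc.ne (congrArg (gl A B) h)))
        (lt_of_le_of_ne hc'.le (fun h => hc'.ne (congrArg (gl A B) h)))
    · exact inr_le_inl hc'.le

lemma covby_inr_inr {b b' : B.carrier} :
    gr A B b ⋖ gr A B b' ↔ b ⋖ b' := by
  constructor
  · rintro ⟨hlt, hmax⟩
    refine ⟨lt_of_le_of_ne hlt.le (fun h => hlt.ne (congrArg (gr A B) h)), ?_⟩
    intro c hc hc'
    exact @hmax (gr A B c)
      (lt_of_le_of_ne (inr_le_inr.mpr hc.le) (fun h => hc.ne (gr_inj h)))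
      (lt_of_le_of_ne (inr_le_inr.mpr hc'.le) (fun h => hc'.ne (gr_inj h)))
  · rintro ⟨hlt, hmax⟩
    refine ⟨lt_of_le_of_ne (inr_le_inr.mpr hlt.le) (fun h => hlt.ne (gr_inj h)), ?_⟩
    rintro ⟨c|c⟩ hc hc'
    · exact inr_le_inl hc.le
    · exact hmax (lt_of_le_of_ne hc.le (fun h => hc.ne (congrArg (gr A B) h)))
        (lt_of_le_of_ne hc'.le (fun h => hc'.ne (congrArg (gr A B) h)))

lemma covby_inl_inr {a : A.carrier} {b : B.carrier}
    (h : gl A B a ⋖ gr A B b) : a = ⊥ ∧ b = ⊥ := by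
  obtain ⟨hlt, hmax⟩ := h
  have ha : a = ⊥ := hlt.le
  refine ⟨ha, ?_⟩
  by_contra hb
  exact @hmax (gr A B ⊥)
    (lt_of_le_of_ne (inl_le_inr.mpr ha) gl_ne_gr)
    (lt_of_le_of_ne (inr_le_inr.mpr bot_le) (fun h => hb (gr_inj h).symm))

lemma not_covby_inr_inl {a : A.carrier} {b : B.carrier} :
    ¬ (gr A B b ⋖ gl A B a) := fun h => inr_le_inl h.lt.le

end TreeGlue

open TreeGlue in
/-- The joint projection property for the family of finite rooted trees:
any two finite rooted trees admit a common epimorphic preimage. -/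
theorem finiteRootedTrees_JPP (A B : FiniteRootedTree) :
    ∃ (C : FiniteRootedTree) (φ : C.carrier → A.carrier) (ψ : C.carrier → B.carrier),
      IsTreeEpi C A φ ∧ IsTreeEpi C B ψ := by
  refine ⟨TreeGlue.C A B, fun x => Sum.elim id (fun _ => ⊥) x.val,
    fun x => Sum.elim (fun _ => ⊥) id x.val, ?_, ?_⟩
  · refine ⟨fun a => ⟨gl A B a, rfl⟩, ?_, ?_⟩
    · rintro ⟨a | b⟩ ⟨a' | b'⟩ (h | h)
      · exact Or.inl (gl_inj h)
      · exact Or.inr (covby_inl_inl.mp h)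
      · exact absurd h gl_ne_gr
      · exact Or.inl ((covby_inl_inr h).1)
      · exact absurd h gr_ne_gl
      · exact absurd h not_covby_inr_inl
      · exact Or.inl rfl
      · exact Or.inl rfl
    · rintro t t' (h | h)
      · exact ⟨gl A B t, gl A B t', rfl, rfl, Or.inl (congrArg (gl A B) h)⟩
      · exact ⟨gl A B t, gl A B t', rfl, rfl, Or.inr (covby_inl_inl.mpr h)⟩
  · refine ⟨fun b => ⟨gr A B b, rfl⟩, ?_, ?_⟩
    · rintro ⟨a | b⟩ ⟨a' | b'⟩ (h | h)
      · exact Or.inl rfl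
      · exact Or.inl rfl
      · exact absurd h gl_ne_gr
      · exact Or.inl ((covby_inl_inr h).2).symm
      · exact absurd h gr_ne_gl
      · exact absurd h not_covby_inr_inl
      · exact Or.inl (gr_inj h)
      · exact Or.inr (covby_inr_inr.mp h)
    · rintro t t' (h | h)
      · exact ⟨gr A B t, gr A B t', rfl, rfl, Or.inl (congrArg (gr A B) h)⟩
      · exact ⟨gr A B t, gr A B t', rfl, rfl, Or.inr (covby_inr_inr.mpr h)⟩
end

section
/- Let A, B₁, B₂ be finite rooted trees and let φ₁ : B₁ → A and φ₂ : B₂ → A be epimorphisms. Then there exist a finite rooted tree C (which may moreover be taken to be a fan) and epimorphisms φ₃ : C → B₁ and φ₄ : C → B₂ such that φ₁ ∘ φ₃ = φ₂ ∘ φ₄. (The amalgamation property for the family of finite rooted trees; Proposition 2.3, AP part.) -/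
/-- A fan: a finite rooted tree in which any common `R`-predecessor of two incomparable
points (other than the points themselves) is the root, and all branches (maximal chains)
have the same number of elements. -/
def IsFan (T : FiniteRootedTree) : Prop :=
  (∀ s t p : T.carrier, ¬ s ≤ t → ¬ t ≤ s → p ≠ s → p ≠ t → T.R p s → T.R p t → p = ⊥) ∧
  (∀ b₁ b₂ : Set T.carrier, IsMaxChain (· ≤ ·) b₁ → IsMaxChain (· ≤ ·) b₂ →
    b₁.ncard = b₂.ncard)

namespace FiniteRootedTree

variable {T : FiniteRootedTree}

theorem eq_of_covBy_of_covBy {s s' t : T.carrier} (hs : s ⋖ t) (hs' : s' ⋖ t) : s = s' := by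
  by_contra hne
  rcases T.chains t hs.le hs'.le hne with hle | hle
  · exact hs.2 (hle.lt_of_ne hne) hs'.lt
  · exact hs'.2 (hle.lt_of_ne (Ne.symm hne)) hs.lt

theorem exists_covBy_of_ne_bot {t : T.carrier} (ht : t ≠ ⊥) : ∃ s, s ⋖ t :=
  exists_covBy_of_wellFoundedGT (not_isMin_iff_ne_bot.2 ht)

end FiniteRootedTree

theorem IsTreeEpi.map_bot {S T : FiniteRootedTree} {φ : S.carrier → T.carrier}
    (h : IsTreeEpi S T φ) : φ ⊥ = ⊥ := by
  classical
  let := Fintype.toLocallyFiniteOrder (α := S.carrier)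
  have hmono : Monotone φ := (monotone_iff_forall_covBy φ).2 fun s t hst =>
    (h.2.1 s t (Or.inr hst)).elim (·.le) (·.le)
  obtain ⟨s, hs⟩ := h.1 ⊥
  exact le_bot_iff.1 (hs ▸ hmono bot_le)

def extendAfter {α : Type*} (u : ℕ → α) (n : ℕ) (a : α) (k : ℕ) : α :=
  if k ≤ n then u k else a

theorem extendAfter_of_le {α : Type*} {u : ℕ → α} {n k : ℕ} {a : α} (h : k ≤ n) :
    extendAfter u n a k = u k :=
  if_pos h

theorem extendAfter_of_lt {α : Type*} {u : ℕ → α} {n k : ℕ} {a : α} (h : n < k) :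
    extendAfter u n a k = a :=
  if_neg h.not_ge

theorem comp_extendAfter {α β : Type*} (f : α → β) (u : ℕ → α) (n : ℕ) (a : α) :
    f ∘ extendAfter u n a = extendAfter (f ∘ u) n (f a) := by
  funext k
  simp only [Function.comp_apply, extendAfter]
  split_ifs <;> rfl

namespace FiniteRootedTree

def IsWalk (T : FiniteRootedTree) (u : ℕ → T.carrier) : Prop :=
  u 0 = ⊥ ∧ ∀ k, T.R (u k) (u (k + 1))

variable {T : FiniteRootedTree} {u : ℕ → T.carrier}

theorem IsWalk.extendAfter (hu : T.IsWalk u) {n : ℕ} {a : T.carrier} (ha : T.R (u n) a) :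
    T.IsWalk (_root_.extendAfter u n a) := by
  refine ⟨(extendAfter_of_le n.zero_le).trans hu.1, fun k => ?_⟩
  rcases lt_trichotomy k n with hk | rfl | hk
  · rw [extendAfter_of_le hk.le, extendAfter_of_le hk]
    exact hu.2 k
  · rw [extendAfter_of_le le_rfl, extendAfter_of_lt k.lt_succ_self]
    exact ha
  · rw [extendAfter_of_lt hk, extendAfter_of_lt (hk.trans k.lt_succ_self)]
    exact Or.inl rfl

theorem IsWalk.exists_step_eq_of_covBy (hu : T.IsWalk u) {t t' : T.carrier} (h : t ⋖ t') :
    ∀ {n}, u n = t' → ∃ k < n, u k = t ∧ u (k + 1) = t'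
  | 0, hn => absurd h.lt (by rw [← hn, hu.1]; exact not_lt_bot)
  | n + 1, hn => by
    by_cases hstay : u n = t'
    · obtain ⟨k, hk, hkt⟩ := hu.exists_step_eq_of_covBy h hstay
      exact ⟨k, hk.trans n.lt_succ_self, hkt⟩
    · have hcov : u n ⋖ t' := hn ▸ Or.resolve_left (hu.2 n) (hn ▸ hstay)
      exact ⟨n, n.lt_succ_self, eq_of_covBy_of_covBy hcov h, hn⟩

end FiniteRootedTree

section Amalgamation

open FiniteRootedTree

variable {A B₁ B₂ : FiniteRootedTree} {φ₁ : B₁.carrier → A.carrier}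
  {φ₂ : B₂.carrier → A.carrier}

theorem exists_compatible_lower_step (h₁ : IsTreeEpi B₁ A φ₁) (h₂ : IsTreeEpi B₂ A φ₂)
    {b₁ : B₁.carrier} {b₂ : B₂.carrier} (hb : φ₁ b₁ = φ₂ b₂) (hne : (b₁, b₂) ≠ (⊥, ⊥)) :
    ∃ p : B₁.carrier × B₂.carrier, φ₁ p.1 = φ₂ p.2 ∧ p < (b₁, b₂) ∧ B₁.R p.1 b₁ ∧ B₂.R p.2 b₂ := by
  by_cases hstay₁ : ∃ p₁, p₁ ⋖ b₁ ∧ φ₁ p₁ = φ₁ b₁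
  · obtain ⟨p₁, hp₁, hφ⟩ := hstay₁
    exact ⟨(p₁, b₂), hφ.trans hb, Prod.mk_lt_mk_iff_left.2 hp₁.lt, Or.inr hp₁, Or.inl rfl⟩
  by_cases hstay₂ : ∃ p₂, p₂ ⋖ b₂ ∧ φ₂ p₂ = φ₂ b₂
  · obtain ⟨p₂, hp₂, hφ⟩ := hstay₂
    exact ⟨(b₁, p₂), hb.trans hφ.symm, Prod.mk_lt_mk_iff_right.2 hp₂.lt, Or.inl rfl, Or.inr hp₂⟩
  push Not at hstay₁ hstay₂
  have move₁ : ∀ p₁, p₁ ⋖ b₁ → φ₁ p₁ ⋖ φ₁ b₁ := fun p hp =>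
    Or.resolve_left (h₁.2.1 _ _ (Or.inr hp)) (hstay₁ p hp)
  have move₂ : ∀ p₂, p₂ ⋖ b₂ → φ₂ p₂ ⋖ φ₂ b₂ := fun p hp =>
    Or.resolve_left (h₂.2.1 _ _ (Or.inr hp)) (hstay₂ p hp)
  have hb₁ : b₁ ≠ ⊥ := by
    rintro rfl
    obtain ⟨p₂, hp₂⟩ := exists_covBy_of_ne_bot (t := b₂) fun h => hne (by rw [h])
    exact not_lt_bot ((move₂ p₂ hp₂).lt.trans_eq (by rw [← hb, h₁.map_bot]))
  have hb₂ : b₂ ≠ ⊥ := by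
    rintro rfl
    obtain ⟨p₁, hp₁⟩ := exists_covBy_of_ne_bot hb₁
    exact not_lt_bot ((move₁ p₁ hp₁).lt.trans_eq (by rw [hb, h₂.map_bot]))
  obtain ⟨p₁, hp₁⟩ := exists_covBy_of_ne_bot hb₁
  obtain ⟨p₂, hp₂⟩ := exists_covBy_of_ne_bot hb₂
  refine ⟨(p₁, p₂), eq_of_covBy_of_covBy (move₁ p₁ hp₁) (hb ▸ move₂ p₂ hp₂),
    Prod.mk_lt_mk_of_lt_of_le hp₁.lt hp₂.le, Or.inr hp₁, Or.inr hp₂⟩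

theorem exists_compatible_walks (h₁ : IsTreeEpi B₁ A φ₁) (h₂ : IsTreeEpi B₂ A φ₂)
    (p : B₁.carrier × B₂.carrier) (hp : φ₁ p.1 = φ₂ p.2) :
    ∃ (n : ℕ) (u₁ : ℕ → B₁.carrier) (u₂ : ℕ → B₂.carrier), B₁.IsWalk u₁ ∧ B₂.IsWalk u₂ ∧
      φ₁ ∘ u₁ = φ₂ ∘ u₂ ∧ u₁ n = p.1 ∧ u₂ n = p.2 := by
  induction p using WellFoundedLT.induction with
  | _ p ih =>
  by_cases hbot : p = (⊥, ⊥)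
  · subst hbot
    refine ⟨0, fun _ => ⊥, fun _ => ⊥, ⟨rfl, fun _ => Or.inl rfl⟩, ⟨rfl, fun _ => Or.inl rfl⟩,
      ?_, rfl, rfl⟩
    funext k
    exact hp
  obtain ⟨q, hq, hqp, hR₁, hR₂⟩ := exists_compatible_lower_step h₁ h₂ hp hbot
  obtain ⟨n, u₁, u₂, hu₁, hu₂, hcomm, hn₁, hn₂⟩ := ih q hqp hq
  refine ⟨n + 1, extendAfter u₁ n p.1, extendAfter u₂ n p.2, hu₁.extendAfter (hn₁ ▸ hR₁),
    hu₂.extendAfter (hn₂ ▸ hR₂), ?_, extendAfter_of_lt n.lt_succ_self,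
    extendAfter_of_lt n.lt_succ_self⟩
  rw [comp_extendAfter, comp_extendAfter, hcomm, hp]

end Amalgamation

theorem Sigma.mk_covBy_mk_iff {ι : Type*} {α : ι → Type*} [∀ i, Preorder (α i)] {i : ι}
    {a b : α i} : (⟨i, a⟩ : Σ i, α i) ⋖ ⟨i, b⟩ ↔ a ⋖ b := by
  refine ⟨fun h => ⟨Sigma.mk_lt_mk_iff.1 h.1, fun c hac hcb =>
    h.2 (Sigma.mk_lt_mk_iff.2 hac) (Sigma.mk_lt_mk_iff.2 hcb)⟩,
    fun h => ⟨Sigma.mk_lt_mk_iff.2 h.1, ?_⟩⟩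
  rintro ⟨j, c⟩ ⟨_, _, _, hac⟩ hcb
  exact h.2 hac (Sigma.mk_lt_mk_iff.1 hcb)

section Fan

abbrev FanPoint (ι : Type) (N : ℕ) : Type := WithBot (Σ _ : ι, Fin N)

variable {ι : Type} {N : ℕ}

theorem fan_comparable_of_le {x y t : FanPoint ι N} (hx : x ≤ t) (hy : y ≤ t) :
    x ≤ y ∨ y ≤ x := by
  induction x using WithBot.recBotCoe with
  | bot => exact Or.inl bot_le
  | coe x =>
  induction y using WithBot.recBotCoe with
  | bot => exact Or.inr bot_le
  | coe y =>
  induction t using WithBot.recBotCoe with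
  | bot => exact absurd hx (WithBot.not_coe_le_bot x)
  | coe t =>
  simp only [WithBot.coe_le_coe] at hx hy ⊢
  obtain ⟨z, a, b, -⟩ := hx
  obtain ⟨_, c, _, -⟩ := hy
  exact (le_total a c).imp Sigma.mk_le_mk_iff.2 Sigma.mk_le_mk_iff.2

theorem fan_comparable_of_coe_le {x : Σ _ : ι, Fin N} {s t : FanPoint ι N}
    (hs : ↑x ≤ s) (ht : ↑x ≤ t) : s ≤ t ∨ t ≤ s := by
  induction s using WithBot.recBotCoe with
  | bot => exact absurd hs (WithBot.not_coe_le_bot x)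
  | coe s =>
  induction t using WithBot.recBotCoe with
  | bot => exact absurd ht (WithBot.not_coe_le_bot x)
  | coe t =>
  simp only [WithBot.coe_le_coe] at hs ht ⊢
  obtain ⟨z, a, b, -⟩ := hs
  obtain ⟨_, _, c, -⟩ := ht
  exact (le_total b c).imp Sigma.mk_le_mk_iff.2 Sigma.mk_le_mk_iff.2

theorem fan_bot_covBy_coe_iff {z : ι} {i : Fin N} :
    (⊥ : FanPoint ι N) ⋖ ↑(⟨z, i⟩ : Σ _ : ι, Fin N) ↔ (i : ℕ) = 0 := by
  rw [WithBot.bot_covBy_coe]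
  refine ⟨fun h => ?_, fun hi => ?_⟩
  · by_contra hi
    exact h.not_lt (Sigma.mk_lt_mk_iff.2 (show (⟨0, i.pos⟩ : Fin N) < i from
      Fin.lt_def.2 (Nat.pos_of_ne_zero hi)))
  · rintro ⟨_, j⟩ ⟨_, _, _, -⟩
    exact Sigma.mk_le_mk_iff.2 (Fin.le_def.2 (hi ▸ Nat.zero_le _))

theorem fan_coe_covBy_coe_iff {z z' : ι} {i j : Fin N} :
    (↑(⟨z, i⟩ : Σ _ : ι, Fin N) : FanPoint ι N) ⋖ ↑(⟨z', j⟩ : Σ _ : ι, Fin N) ↔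
      z = z' ∧ (i : ℕ) + 1 = j := by
  rw [WithBot.coe_covBy_coe]
  constructor
  · intro h
    obtain ⟨_, _, _, -⟩ := h.1
    have hij := (Sigma.mk_covBy_mk_iff (α := fun _ : ι => Fin N)).1 h
    exact ⟨rfl, Nat.covBy_iff_add_one_eq.1 (Fin.covBy_iff.1 hij)⟩
  · rintro ⟨rfl, h⟩
    exact Sigma.mk_covBy_mk_iff.2 (Fin.covBy_iff.2 (Nat.covBy_iff_add_one_eq.2 h))

def fanBranch (z : ι) : Set (FanPoint ι N) :=
  insert ⊥ (Set.range fun i : Fin N => ((⟨z, i⟩ : Σ _ : ι, Fin N) : FanPoint ι N))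

theorem isChain_fanBranch (z : ι) : IsChain (· ≤ ·) (fanBranch (N := N) z) := by
  rintro _ (rfl | ⟨i, rfl⟩) _ (rfl | ⟨j, rfl⟩) -
  · exact Or.inl le_rfl
  · exact Or.inl bot_le
  · exact Or.inr bot_le
  · exact (le_total i j).imp (fun h => WithBot.coe_le_coe.2 (Sigma.mk_le_mk_iff.2 h))
      (fun h => WithBot.coe_le_coe.2 (Sigma.mk_le_mk_iff.2 h))

theorem ncard_fanBranch (z : ι) : (fanBranch (N := N) z).ncard = N + 1 := by
  rw [fanBranch, Set.ncard_insert_of_notMem (by rintro ⟨i, hi⟩; exact WithBot.coe_ne_bot hi),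
    Set.ncard_range_of_injective (fun i j h => by simpa using h), Nat.card_eq_fintype_card,
    Fintype.card_fin]

theorem IsMaxChain.eq_fanBranch [Nonempty ι] {b : Set (FanPoint ι N)}
    (hb : IsMaxChain (· ≤ ·) b) : ∃ z, b = fanBranch z := by
  suffices ∃ z, b ⊆ fanBranch z from this.imp fun z hz => hb.2 (isChain_fanBranch z) hz
  by_cases hcoe : ∃ x : Σ _ : ι, Fin N, ↑x ∈ b
  · obtain ⟨⟨z, i⟩, hzi⟩ := hcoe
    refine ⟨z, fun c hc => ?_⟩
    induction c using WithBot.recBotCoe with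
    | bot => exact Set.mem_insert _ _
    | coe c =>
    obtain ⟨z', j⟩ := c
    have hz' : z' = z := by
      rcases hb.1.total hc hzi with h | h
      · exact (Sigma.le_def.1 (WithBot.coe_le_coe.1 h)).1
      · exact (Sigma.le_def.1 (WithBot.coe_le_coe.1 h)).1.symm
    exact Or.inr ⟨j, by rw [hz']⟩
  · push Not at hcoe
    obtain ⟨z⟩ := ‹Nonempty ι›
    refine ⟨z, fun c hc => ?_⟩
    induction c using WithBot.recBotCoe with
    | bot => exact Set.mem_insert _ _
    | coe c => exact absurd hc (hcoe c)

variable (ι N) in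
def fanTree [Fintype ι] : FiniteRootedTree where
  carrier := FanPoint ι N
  chains _ := fun _ hx _ hy _ => fan_comparable_of_le hx hy

theorem isFan_fanTree [Fintype ι] [Nonempty ι] : IsFan (fanTree ι N) := by
  refine ⟨fun s t p hst hts hps hpt hRs hRt => ?_, fun b₁ b₂ hb₁ hb₂ => ?_⟩
  · induction p using WithBot.recBotCoe with
    | bot => rfl
    | coe x =>
      exact ((fan_comparable_of_coe_le (hRs.resolve_left hps).le
        (hRt.resolve_left hpt).le).elim hst hts).elim
  · obtain ⟨z₁, rfl⟩ := hb₁.eq_fanBranch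
    obtain ⟨z₂, rfl⟩ := hb₂.eq_fanBranch
    exact (ncard_fanBranch z₁).trans (ncard_fanBranch z₂).symm

/-- The root stands for time `0` of every sequence. -/
def fanMap {α : Type*} [Bot α] (u : ι → ℕ → α) : FanPoint ι N → α :=
  WithBot.recBotCoe ⊥ fun x => u x.1 (x.2 + 1)

theorem exists_covBy_fanMap_eq {α : Type*} [Bot α] {u : ι → ℕ → α} {z : ι} (hz : u z 0 = ⊥)
    {k : ℕ} (hk : k < N) : ∃ c c' : FanPoint ι N,
      c ⋖ c' ∧ fanMap u c = u z k ∧ fanMap u c' = u z (k + 1) := by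
  cases k with
  | zero => exact ⟨⊥, ↑(⟨z, ⟨0, hk⟩⟩ : Σ _ : ι, Fin N), fan_bot_covBy_coe_iff.2 rfl, hz.symm, rfl⟩
  | succ k =>
    exact ⟨↑(⟨z, ⟨k, by omega⟩⟩ : Σ _ : ι, Fin N), ↑(⟨z, ⟨k + 1, hk⟩⟩ : Σ _ : ι, Fin N),
      fan_coe_covBy_coe_iff.2 ⟨rfl, rfl⟩, rfl, rfl⟩

theorem isTreeEpi_fanMap [Fintype ι] {T : FiniteRootedTree} {u : ι → ℕ → T.carrier}
    (hu : ∀ z, T.IsWalk (u z)) (hreach : ∀ t, ∃ z, ∃ k ≤ N, u z k = t) :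
    IsTreeEpi (fanTree ι N) T (fanMap u) := by
  have surj : Function.Surjective (fanMap (N := N) u) := by
    intro t
    obtain ⟨z, k, hk, rfl⟩ := hreach t
    cases k with
    | zero => exact ⟨⊥, (hu z).1.symm⟩
    | succ k =>
      obtain ⟨-, c', -, -, hc'⟩ := exists_covBy_fanMap_eq (hu z).1 hk
      exact ⟨c', hc'⟩
  refine ⟨surj, ?_, ?_⟩
  · rintro c c' (rfl | hcc')
    · exact Or.inl rfl
    induction c' using WithBot.recBotCoe with
    | bot => exact absurd hcc'.lt not_lt_bot
    | coe y =>
    obtain ⟨z', j⟩ := y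
    induction c using WithBot.recBotCoe with
    | bot =>
      change T.R ⊥ (u z' (j + 1))
      rw [fan_bot_covBy_coe_iff.1 hcc', ← (hu z').1]
      exact (hu z').2 0
    | coe x =>
      obtain ⟨z, i⟩ := x
      obtain ⟨rfl, hij⟩ := fan_coe_covBy_coe_iff.1 hcc'
      change T.R (u z (i + 1)) (u z (j + 1))
      rw [← hij]
      exact (hu z).2 _
  · rintro t t' (rfl | htt')
    · obtain ⟨c, hc⟩ := surj t
      exact ⟨c, c, hc, hc, Or.inl rfl⟩
    obtain ⟨z, k, hk, hkt'⟩ := hreach t'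
    obtain ⟨j, hjk, hj, hj'⟩ := (hu z).exists_step_eq_of_covBy htt' hkt'
    obtain ⟨c, c', hcc', hc, hc'⟩ := exists_covBy_fanMap_eq (hu z).1 (hjk.trans_le hk)
    exact ⟨c, c', hc.trans hj, hc'.trans hj', Or.inr hcc'⟩

end Fan

/-- The amalgamation property for the family of finite rooted trees: two epimorphisms
onto a common tree can be amalgamated, moreover by a fan. -/
theorem finiteRootedTrees_AP (A B₁ B₂ : FiniteRootedTree)
    (φ₁ : B₁.carrier → A.carrier) (φ₂ : B₂.carrier → A.carrier)
    (h₁ : IsTreeEpi B₁ A φ₁) (h₂ : IsTreeEpi B₂ A φ₂) :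
    ∃ (C : FiniteRootedTree) (φ₃ : C.carrier → B₁.carrier) (φ₄ : C.carrier → B₂.carrier),
      IsFan C ∧ IsTreeEpi C B₁ φ₃ ∧ IsTreeEpi C B₂ φ₄ ∧ φ₁ ∘ φ₃ = φ₂ ∘ φ₄ := by
  classical
  let ι := {p : B₁.carrier × B₂.carrier // φ₁ p.1 = φ₂ p.2}
  have : Nonempty ι := ⟨⟨(⊥, ⊥), by rw [h₁.map_bot, h₂.map_bot]⟩⟩
  choose n u₁ u₂ hu₁ hu₂ hcomm hend₁ hend₂ using fun p : ι => exists_compatible_walks h₁ h₂ p.1 p.2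
  let N := Finset.univ.sup n
  refine ⟨fanTree ι N, fanMap u₁, fanMap u₂, isFan_fanTree, isTreeEpi_fanMap hu₁ fun t => ?_,
    isTreeEpi_fanMap hu₂ fun t => ?_, ?_⟩
  · obtain ⟨b₂, hb₂⟩ := h₂.1 (φ₁ t)
    exact ⟨⟨(t, b₂), hb₂.symm⟩, _, Finset.le_sup (Finset.mem_univ _), hend₁ _⟩
  · obtain ⟨b₁, hb₁⟩ := h₁.1 (φ₂ t)
    exact ⟨⟨(b₁, t), hb₁⟩, _, Finset.le_sup (Finset.mem_univ _), hend₂ _⟩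
  · funext c
    induction c using WithBot.recBotCoe with
    | bot => exact h₁.map_bot.trans h₂.map_bot.symm
    | coe x => exact congrFun (hcomm x.1) (x.2 + 1)
end

section
/- There exists a nondegenerate subcontinuum L of the Cantor fan F whose set of endpoints is dense in L; that is, a Lelek fan exists. -/
/-- The equivalence relation on `(ℕ → Bool) × [0,1]` identifying two points iff they are
equal or both have second coordinate `0`. -/
def CantorFanSetoid : Setoid ((ℕ → Bool) × unitInterval) where
  r p q := p = q ∨ (p.2 = 0 ∧ q.2 = 0)
  iseqv := by
    constructor
    · intro p; exact Or.inl rfl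
    · rintro p q (h | h)
      · exact Or.inl h.symm
      · exact Or.inr ⟨h.2, h.1⟩
    · rintro p q r (h | h) (h' | h')
      · exact Or.inl (h.trans h')
      · exact Or.inr ⟨by rw [h]; exact h'.1, h'.2⟩
      · exact Or.inr ⟨h.1, by rw [← h']; exact h.2⟩
      · exact Or.inr ⟨h.1, h'.2⟩

/-- The Cantor fan: the cone over the Cantor set `{0,1}^ℕ`, i.e. the quotient of
`{0,1}^ℕ × [0,1]` collapsing `{0,1}^ℕ × {0}` to a point. -/
def CantorFan : Type := Quotient CantorFanSetoid

instance : TopologicalSpace CantorFan := instTopologicalSpaceQuotient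

/-- The top `v` of the Cantor fan. -/
def fanTop : CantorFan := Quotient.mk CantorFanSetoid (fun _ => false, 0)

/-- `e` is an endpoint of `X ⊆ CantorFan` if `e ∈ X` and for every arc contained in `X`
and containing `e`, the point `e` is an endpoint of that arc. -/
def IsEndpoint (X : Set CantorFan) (e : CantorFan) : Prop :=
  e ∈ X ∧ ∀ h : unitInterval → CantorFan, Topology.IsEmbedding h →
    Set.range h ⊆ X → e ∈ Set.range h → e = h 0 ∨ e = h 1

/-- A Lelek fan: a nondegenerate subcontinuum of the Cantor fan whose set of endpoints
is dense in it. -/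
def IsLelekFan (L : Set CantorFan) : Prop :=
  L.Nontrivial ∧ IsCompact L ∧ IsConnected L ∧ L ⊆ closure {e | IsEndpoint L e}


/-!
The fan `L = {[a, t] : t ≤ φ a}` with `φ a = (1 + ∑_{a k} 1/(k+1))⁻¹` is a Lelek fan. It is
compact because `φ` is upper semicontinuous, and connected because it contains the segment from
the top to each of its points. On a leg `a` with finitely many `1`s the top `[a, φ a]` is an
endpoint: an arc through it avoiding the top stays in that leg, so its height is injective and
cannot peak at an interior parameter. These tops are dense since the tails of the harmonic series
have finite subsums approximating every nonnegative real.
-/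

open Set Filter Topology

theorem exists_mem_Ioc_of_forall_succ_lt_add {S : ℕ → ℝ} {T δ : ℝ} (h0 : S 0 ≤ T)
    (hstep : ∀ j, S (j + 1) < S j + δ) (hT : ∃ j, T < S j) : ∃ j, S j ∈ Ioc (T - δ) T := by
  classical
  obtain ⟨j, hj⟩ : ∃ j, Nat.find hT = j + 1 :=
    Nat.exists_eq_succ_of_ne_zero fun h => (Nat.find_spec hT).not_ge (h ▸ h0)
  have hlt : T < S (j + 1) := hj ▸ Nat.find_spec hT
  exact ⟨j, by linarith [hstep j], not_lt.1 (Nat.find_min hT (by omega))⟩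

theorem exists_finset_sum_near_of_tendsto {w : ℕ → ℝ} (hw : Tendsto w atTop (𝓝 0))
    (hdiv : Tendsto (fun n => ∑ k ∈ Finset.range n, w k) atTop atTop) {T δ : ℝ} (hT : 0 ≤ T)
    (hδ : 0 < δ) (n : ℕ) : ∃ F : Finset ℕ, (∀ k ∈ F, n ≤ k) ∧ |∑ k ∈ F, w k - T| < δ := by
  obtain ⟨m, hm⟩ :=
    ((hw.eventually (gt_mem_nhds hδ)).and (eventually_ge_atTop n)).exists_forall_of_atTop
  set S : ℕ → ℝ := fun j => ∑ i ∈ Finset.range j, w (m + i)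
  have hS : Tendsto S atTop atTop := by
    refine (tendsto_atTop_add_const_right _ (-∑ k ∈ Finset.range m, w k)
      ((tendsto_add_atTop_iff_nat m).2 hdiv)).congr fun j => ?_
    simp only [S]
    rw [add_comm j, Finset.sum_range_add]
    ring
  obtain ⟨j, hj⟩ := exists_mem_Ioc_of_forall_succ_lt_add (S := S) (by simpa [S] using hT)
    (fun j => by simpa [S, Finset.sum_range_succ] using (hm (m + j) (by omega)).1)
    (hS.eventually_gt_atTop T).exists
  refine ⟨Finset.Ico m (m + j), fun k hk => (hm m le_rfl).2.trans (Finset.mem_Ico.1 hk).1, ?_⟩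
  rw [Finset.sum_Ico_eq_sum_range, Nat.add_sub_cancel_left, abs_lt]
  constructor <;> linarith [hj.1, hj.2]

theorem abs_inv_sub_inv_le_abs_sub {x y : ℝ} (hx : 1 ≤ x) (hy : 1 ≤ y) :
    |x⁻¹ - y⁻¹| ≤ |x - y| := by
  rw [inv_sub_inv (by positivity) (by positivity), abs_div, abs_sub_comm,
    abs_of_pos (by positivity : 0 < x * y)]
  exact div_le_self (abs_nonneg _) (one_le_mul_of_one_le_of_one_le hx hy)

theorem ContinuousOn.not_isMaxOn_of_injOn_Ioo {α δ : Type*} [ConditionallyCompleteLinearOrder α]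
    [TopologicalSpace α] [OrderTopology α] [DenselyOrdered α] [LinearOrder δ] [TopologicalSpace δ]
    [OrderClosedTopology δ] {f : α → δ} {l r x : α} (hf : ContinuousOn f (Ioo l r))
    (hinj : InjOn f (Ioo l r)) (hx : x ∈ Ioo l r) : ¬ IsMaxOn f (Ioo l r) x := by
  intro hmax
  obtain ⟨y₁, hly₁, hy₁x⟩ := exists_between hx.1
  obtain ⟨y₂, hxy₂, hy₂r⟩ := exists_between hx.2
  have hy₁ : y₁ ∈ Ioo l r := ⟨hly₁, hy₁x.trans hx.2⟩
  have hy₂ : y₂ ∈ Ioo l r := ⟨hx.1.trans hxy₂, hy₂r⟩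
  rcases hf.strictMonoOn_of_injOn_Ioo (hx.1.trans hx.2) hinj with hmono | hanti
  · exact (hmono hx hy₂ hxy₂).not_ge (hmax hy₂)
  · exact (hanti hy₁ hx hy₁x).not_ge (hmax hy₁)

theorem PiNat.exists_cylinder_subset_of_mem_nhds {E : ℕ → Type*} [∀ n, TopologicalSpace (E n)]
    [∀ n, DiscreteTopology (E n)] {x : ∀ n, E n} {s : Set (∀ n, E n)} (hs : s ∈ 𝓝 x) :
    ∃ n, PiNat.cylinder x n ⊆ s := by
  obtain ⟨_, ⟨y, n, rfl⟩, hx, hsub⟩ := (PiNat.isTopologicalBasis_cylinders E).mem_nhds_iff.1 hs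
  exact ⟨n, PiNat.mem_cylinder_iff_eq.1 hx ▸ hsub⟩

namespace CantorFan

abbrev mk : (ℕ → Bool) × unitInterval → CantorFan := Quotient.mk CantorFanSetoid

theorem continuous_mk : Continuous mk := continuous_quotient_mk'

theorem mk_surjective : Function.Surjective mk := Quotient.mk_surjective

theorem mk_eq_mk_iff {p q : (ℕ → Bool) × unitInterval} :
    mk p = mk q ↔ p = q ∨ (p.2 = 0 ∧ q.2 = 0) :=
  Quotient.eq

def height : CantorFan → ℝ :=
  Quotient.lift (fun p => (p.2 : ℝ)) <| by
    rintro p q (rfl | ⟨hp, hq⟩)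
    · rfl
    · simp [hp, hq]

@[simp] theorem height_mk (p : (ℕ → Bool) × unitInterval) : height (mk p) = p.2 := rfl

@[simp] theorem height_fanTop : height fanTop = 0 := rfl

theorem continuous_height : Continuous height :=
  continuous_subtype_val.comp continuous_snd |>.quotient_lift _

/-- Unlike the `n`-th coordinate of the leg, its product with the height is well defined and
continuous at the top. -/
def legCoord (n : ℕ) : CantorFan → ℝ :=
  Quotient.lift (fun p => (p.2 : ℝ) * if p.1 n then 1 else 0) <| by
    rintro p q (rfl | ⟨hp, hq⟩)
    · rfl
    · simp [hp, hq]

@[simp] theorem legCoord_mk (n : ℕ) (p : (ℕ → Bool) × unitInterval) :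
    legCoord n (mk p) = (p.2 : ℝ) * if p.1 n then 1 else 0 := rfl

theorem continuous_legCoord (n : ℕ) : Continuous (legCoord n) := by
  refine Continuous.quotient_lift ?_ _
  exact (continuous_subtype_val.comp continuous_snd).mul
    ((continuous_of_discreteTopology (f := fun b : Bool => if b then (1 : ℝ) else 0)).comp
      ((continuous_apply n).comp continuous_fst))

theorem legCoord_div_height_mk (n : ℕ) {p : (ℕ → Bool) × unitInterval} (hp : (p.2 : ℝ) ≠ 0) :
    legCoord n (mk p) / height (mk p) = if p.1 n then 1 else 0 := by
  split_ifs with h <;> simp [h, hp]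

theorem exists_eq_mk_of_isPreconnected {S : Set CantorFan} (hS : IsPreconnected S)
    (hpos : ∀ z ∈ S, 0 < height z) {b : ℕ → Bool} {τ : unitInterval} (hb : mk (b, τ) ∈ S)
    {z : CantorFan} (hz : z ∈ S) : ∃ s, z = mk (b, s) := by
  obtain ⟨⟨c, s⟩, rfl⟩ := mk_surjective z
  refine ⟨s, congrArg (fun c => mk (c, s)) (funext fun n => ?_)⟩
  have hq : ContinuousOn (fun z => legCoord n z / height z) S :=
    (continuous_legCoord n).continuousOn.div continuous_height.continuousOn
      fun z hz => (hpos z hz).ne'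
  have hmaps : MapsTo (fun z => legCoord n z / height z) S {0, 1} := by
    intro z hz
    obtain ⟨p, rfl⟩ := mk_surjective z
    simp only [legCoord_div_height_mk n (hpos _ hz).ne']
    split_ifs <;> simp
  have := hS.constant_of_mapsTo (toFinite _).isDiscrete hq hmaps hz hb
  rw [legCoord_div_height_mk n (hpos _ hz).ne', legCoord_div_height_mk n (hpos _ hb).ne'] at this
  cases hc : c n <;> cases hb' : b n <;> simp_all

theorem isEndpoint_mk_of_forall_le {X : Set CantorFan} {b : ℕ → Bool} {τ : unitInterval}
    (hmem : mk (b, τ) ∈ X) (hpos : 0 < (τ : ℝ)) (hmax : ∀ s, mk (b, s) ∈ X → s ≤ τ) :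
    IsEndpoint X (mk (b, τ)) := by
  refine ⟨hmem, fun h hemb hX ⟨x, hx⟩ => ?_⟩
  by_contra! hne
  have hx0 : 0 < x := unitInterval.pos_iff_ne_zero.2 fun h0 => hne.1 (by rw [← hx, h0])
  have hx1 : x < 1 := unitInterval.lt_one_iff_ne_one.2 fun h1 => hne.2 (by rw [← hx, h1])
  set θ : unitInterval → ℝ := fun y => height (h y)
  have hθ : Continuous θ := continuous_height.comp hemb.continuous
  have hθx : θ x = τ := by simp [θ, hx]
  obtain ⟨l, r, hxlr, hlr⟩ := (mem_nhds_iff_exists_Ioo_subset' ⟨0, hx0⟩ ⟨1, hx1⟩).1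
    ((isOpen_lt continuous_const hθ).mem_nhds (hθx ▸ hpos))
  -- near `x` the arc avoids the top, hence stays on the leg `b`
  have hleg : ∀ y ∈ Ioo l r, ∃ s, h y = mk (b, s) := fun y hy =>
    exists_eq_mk_of_isPreconnected (isPreconnected_Ioo.image h hemb.continuous.continuousOn)
      (forall_mem_image.2 fun y hy => hlr hy) (hx ▸ mem_image_of_mem h hxlr)
      (mem_image_of_mem h hy)
  have hinj : InjOn θ (Ioo l r) := by
    intro y hy y' hy' hθyy'
    obtain ⟨s, hs⟩ := hleg y hy
    obtain ⟨s', hs'⟩ := hleg y' hy'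
    have hss' : s = s' := Subtype.ext (by simpa [θ, hs, hs'] using hθyy')
    exact hemb.injective (by rw [hs, hs', hss'])
  have hmaxOn : IsMaxOn θ (Ioo l r) x := by
    intro y hy
    obtain ⟨s, hs⟩ := hleg y hy
    have hsτ : s ≤ τ := hmax s (hs ▸ hX (mem_range_self y))
    simpa [θ, hs, hθx] using hsτ
  exact hθ.continuousOn.not_isMaxOn_of_injOn_Ioo hinj hxlr hmaxOn

theorem joinedIn_fanTop_mk {X : Set CantorFan} {a : ℕ → Bool} {t : unitInterval}
    (h : ∀ s ≤ t, mk (a, s) ∈ X) : JoinedIn X fanTop (mk (a, t)) := by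
  let γ : Path fanTop (mk (a, t)) :=
    { toFun := fun s => mk (a, s * t)
      continuous_toFun :=
        continuous_mk.comp (continuous_const.prodMk (continuous_id.mul continuous_const))
      source' := mk_eq_mk_iff.2 (Or.inr ⟨zero_mul t, rfl⟩)
      target' := by simp only [one_mul] }
  exact ⟨γ, fun s => h _ unitInterval.mul_le_right⟩

end CantorFan

noncomputable section HarmonicFan

open CantorFan

def harmonicWeight (k : ℕ) : ℝ := 1 / (k + 1)

theorem harmonicWeight_nonneg (k : ℕ) : 0 ≤ harmonicWeight k := by
  unfold harmonicWeight
  positivity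

theorem sum_harmonicWeight_nonneg (F : Finset ℕ) : 0 ≤ ∑ k ∈ F, harmonicWeight k :=
  Finset.sum_nonneg fun k _ => harmonicWeight_nonneg k

theorem exists_finset_inv_add_sum_harmonicWeight_near {c t ε : ℝ} (hc : 1 ≤ c) (ht : 0 ≤ t)
    (htc : t * c ≤ 1) (hε : 0 < ε) (n : ℕ) :
    ∃ F : Finset ℕ, (∀ k ∈ F, n ≤ k) ∧ |(c + ∑ k ∈ F, harmonicWeight k)⁻¹ - t| < ε := by
  have near {T δ : ℝ} (hT : 0 ≤ T) (hδ : 0 < δ) :=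
    exists_finset_sum_near_of_tendsto (w := harmonicWeight)
      tendsto_one_div_add_atTop_nhds_zero_nat Real.tendsto_sum_range_one_div_nat_succ_atTop hT hδ n
  rcases ht.eq_or_lt with rfl | ht
  · obtain ⟨F, hFn, hF⟩ := near (inv_nonneg.2 hε.le) one_pos
    have hlarge : ε⁻¹ < c + ∑ k ∈ F, harmonicWeight k := by linarith [(abs_lt.1 hF).1]
    refine ⟨F, hFn, ?_⟩
    rw [sub_zero, abs_of_pos (inv_pos.2 (by linarith [sum_harmonicWeight_nonneg F]))]
    exact inv_lt_of_inv_lt₀ hε hlarge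
  · have hct : c ≤ t⁻¹ := by
      rw [← one_div, le_div_iff₀ ht, mul_comm]
      exact htc
    obtain ⟨F, hFn, hF⟩ := near (sub_nonneg.2 hct) hε
    refine ⟨F, hFn, ?_⟩
    calc |(c + ∑ k ∈ F, harmonicWeight k)⁻¹ - t|
        = |(c + ∑ k ∈ F, harmonicWeight k)⁻¹ - (c + (t⁻¹ - c))⁻¹| := by
          rw [add_sub_cancel, inv_inv]
      _ ≤ |(c + ∑ k ∈ F, harmonicWeight k) - (c + (t⁻¹ - c))| :=
          abs_inv_sub_inv_le_abs_sub (by linarith [sum_harmonicWeight_nonneg F]) (by linarith)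
      _ = |∑ k ∈ F, harmonicWeight k - (t⁻¹ - c)| := by ring_nf
      _ < ε := hF

def harmonicMass (n : ℕ) (a : ℕ → Bool) : ℝ :=
  ∑ k ∈ Finset.range n, if a k then harmonicWeight k else 0

theorem harmonicMass_nonneg (n : ℕ) (a : ℕ → Bool) : 0 ≤ harmonicMass n a :=
  Finset.sum_nonneg fun k _ => by split_ifs <;> simp [harmonicWeight_nonneg]

theorem continuous_harmonicMass (n : ℕ) : Continuous (harmonicMass n) :=
  continuous_finsetSum _ fun k _ =>
    (continuous_of_discreteTopology (f := fun b : Bool => if b then harmonicWeight k else 0)).comp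
      (continuous_apply k)

def finsetLeg (G : Finset ℕ) : ℕ → Bool := fun k => decide (k ∈ G)

theorem harmonicMass_finsetLeg (m : ℕ) (G : Finset ℕ) :
    harmonicMass m (finsetLeg G) = ∑ k ∈ Finset.range m ∩ G, harmonicWeight k := by
  simp only [harmonicMass, finsetLeg, decide_eq_true_eq]
  exact Finset.sum_ite_mem _ _ _

/-- The hypograph of `a ↦ (1 + ∑_{a k} 1/(k+1))⁻¹`, a function that vanishes where the series
diverges; it is written with partial sums so that no junk value of `tsum` enters. -/
def harmonicBase : Set ((ℕ → Bool) × unitInterval) :=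
  {p | ∀ n, (p.2 : ℝ) * (1 + harmonicMass n p.1) ≤ 1}

def harmonicFan : Set CantorFan := mk '' harmonicBase

theorem isClosed_harmonicBase : IsClosed harmonicBase := by
  simp only [harmonicBase, ofPred_forall]
  refine isClosed_iInter fun n => isClosed_le ?_ continuous_const
  exact (continuous_subtype_val.comp continuous_snd).mul
    (continuous_const.add ((continuous_harmonicMass n).comp continuous_fst))

theorem isCompact_harmonicFan : IsCompact harmonicFan :=
  isClosed_harmonicBase.isCompact.image continuous_mk

theorem mk_mem_harmonicFan_iff {p : (ℕ → Bool) × unitInterval} :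
    mk p ∈ harmonicFan ↔ p ∈ harmonicBase := by
  refine ⟨?_, fun hp => ⟨p, hp, rfl⟩⟩
  rintro ⟨q, hq, hqp⟩
  rcases mk_eq_mk_iff.1 hqp with rfl | ⟨-, hp⟩
  · exact hq
  · intro n
    simp [hp]

theorem fanTop_mem_harmonicFan : fanTop ∈ harmonicFan :=
  mk_mem_harmonicFan_iff.2 fun n => by simp

theorem isConnected_harmonicFan : IsConnected harmonicFan := by
  refine IsPathConnected.isConnected ⟨fanTop, fanTop_mem_harmonicFan, ?_⟩
  rintro _ ⟨⟨a, t⟩, hat, rfl⟩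
  refine joinedIn_fanTop_mk fun s hst => mk_mem_harmonicFan_iff.2 fun n => ?_
  calc (s : ℝ) * (1 + harmonicMass n a) ≤ t * (1 + harmonicMass n a) := by
        gcongr
        linarith [harmonicMass_nonneg n a]
    _ ≤ 1 := hat n

theorem nontrivial_harmonicFan : harmonicFan.Nontrivial := by
  refine ⟨mk (fun _ => false, 1), mk_mem_harmonicFan_iff.2 fun n => ?_, fanTop,
    fanTop_mem_harmonicFan, fun h => by simpa using congrArg height h⟩
  simp [harmonicMass]

def harmonicTop (G : Finset ℕ) : unitInterval :=
  ⟨(1 + ∑ k ∈ G, harmonicWeight k)⁻¹, inv_nonneg.2 (by linarith [sum_harmonicWeight_nonneg G]),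
    inv_le_one_of_one_le₀ (by linarith [sum_harmonicWeight_nonneg G])⟩

theorem harmonicTop_pos (G : Finset ℕ) : 0 < (harmonicTop G : ℝ) :=
  inv_pos.2 (by linarith [sum_harmonicWeight_nonneg G])

theorem mem_harmonicBase_finsetLeg_iff {G : Finset ℕ} {s : unitInterval} :
    (finsetLeg G, s) ∈ harmonicBase ↔ s ≤ harmonicTop G := by
  have hpos : 0 < 1 + ∑ k ∈ G, harmonicWeight k := by linarith [sum_harmonicWeight_nonneg G]
  constructor
  · intro hs
    obtain ⟨m, hm⟩ := Finset.exists_nat_subset_range G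
    have := hs m
    rw [harmonicMass_finsetLeg, Finset.inter_eq_right.2 hm] at this
    show (s : ℝ) ≤ (1 + ∑ k ∈ G, harmonicWeight k)⁻¹
    rw [← one_div, le_div_iff₀ hpos]
    exact this
  · intro hs n
    have hmass : harmonicMass n (finsetLeg G) ≤ ∑ k ∈ G, harmonicWeight k := by
      rw [harmonicMass_finsetLeg]
      exact Finset.sum_le_sum_of_subset_of_nonneg Finset.inter_subset_right
        fun k _ _ => harmonicWeight_nonneg k
    calc (s : ℝ) * (1 + harmonicMass n (finsetLeg G))
        ≤ harmonicTop G * (1 + ∑ k ∈ G, harmonicWeight k) :=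
          mul_le_mul hs (by linarith) (by linarith [harmonicMass_nonneg n (finsetLeg G)])
            (harmonicTop G).2.1
      _ = 1 := inv_mul_cancel₀ hpos.ne'

theorem isEndpoint_harmonicTop (G : Finset ℕ) :
    IsEndpoint harmonicFan (mk (finsetLeg G, harmonicTop G)) :=
  isEndpoint_mk_of_forall_le (mk_mem_harmonicFan_iff.2 (mem_harmonicBase_finsetLeg_iff.2 le_rfl))
    (harmonicTop_pos G)
    fun _ hs => mem_harmonicBase_finsetLeg_iff.1 (mk_mem_harmonicFan_iff.1 hs)

theorem exists_harmonicTop_near {a : ℕ → Bool} {t : unitInterval} (hat : (a, t) ∈ harmonicBase)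
    (n : ℕ) {ε : ℝ} (hε : 0 < ε) :
    ∃ G : Finset ℕ, finsetLeg G ∈ PiNat.cylinder a n ∧
      dist (harmonicTop G) t < ε := by
  obtain ⟨F, hFn, hF⟩ := exists_finset_inv_add_sum_harmonicWeight_near
    (by linarith [harmonicMass_nonneg n a]) t.2.1 (hat n) hε n
  have hdisj : Disjoint ((Finset.range n).filter (a ·)) F :=
    Finset.disjoint_left.2 fun k hk hkF =>
      (hFn k hkF).not_gt (Finset.mem_range.1 (Finset.mem_filter.1 hk).1)
  refine ⟨(Finset.range n).filter (a ·) ∪ F, fun i hi => ?_, ?_⟩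
  · have hiF : i ∉ F := fun h => (hFn i h).not_gt hi
    simp [finsetLeg, hi, hiF]
  · rw [Subtype.dist_eq, Real.dist_eq]
    simpa [harmonicTop, Finset.sum_union hdisj, Finset.sum_filter, harmonicMass, add_assoc]
      using hF

theorem harmonicFan_subset_closure_endpoints :
    harmonicFan ⊆ closure {e | IsEndpoint harmonicFan e} := by
  rintro _ ⟨⟨a, t⟩, hat, rfl⟩
  refine map_mem_closure continuous_mk (s := {p | IsEndpoint harmonicFan (mk p)}) ?_
    fun _ hp => hp
  rw [mem_closure_iff_nhds]
  intro U hU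
  obtain ⟨V, hV, J, hJ, hVJ⟩ := mem_nhds_prod_iff.1 hU
  obtain ⟨n, hn⟩ := PiNat.exists_cylinder_subset_of_mem_nhds hV
  obtain ⟨ε, hε, hεJ⟩ := Metric.mem_nhds_iff.1 hJ
  obtain ⟨G, hGa, hGt⟩ := exists_harmonicTop_near hat n hε
  exact ⟨(_, harmonicTop G), hVJ ⟨hn hGa, hεJ hGt⟩, isEndpoint_harmonicTop G⟩

end HarmonicFan

/-- A Lelek fan exists: there is a nondegenerate subcontinuum of the Cantor fan whose
set of endpoints is dense in it. -/
theorem lelekFan_exists : ∃ L : Set CantorFan, IsLelekFan L :=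
  ⟨harmonicFan, nontrivial_harmonicFan, isCompact_harmonicFan, isConnected_harmonicFan,
    harmonicFan_subset_closure_endpoints⟩
end
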